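/- Under the worst case of SRRD canonicalization where the non-forward transition terms retain only their forward subsets (p, q → 0 leaving six reward terms), the effective residual shaping of Ĉ_SRRD applied to R' = R + γφ(s') − φ(s) is E[γ³φ(S₅) − γ²φ(S₆)] (up to an additive constant), whose absolute value is at most 2M; since this Ĉ_SRRD has six reward terms with upper bound 6Z, the relative shaping error satisfies RSE(Ĉ_SRRD(R)) ≤ M/(3Z). -/

import Mathlib

open Finset

theorem abs_sum_mul_le_of_abs_le {Ω : Type*} [Fintype Ω] {p f : Ω → ℝ} {B : ℝ}
    (hp0 : ∀ ω, 0 ≤ p ω) (hp1 : ∑ ω, p ω = 1) (hf : ∀ ω, |f ω| ≤ B) :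
    |∑ ω, p ω * f ω| ≤ B :=
  calc |∑ ω, p ω * f ω| ≤ ∑ ω, |p ω * f ω| := abs_sum_le_sum_abs _ _
    _ ≤ ∑ ω, p ω * B := sum_le_sum fun ω _ => by
        rw [abs_mul, abs_of_nonneg (hp0 ω)]
        exact mul_le_mul_of_nonneg_left (hf ω) (hp0 ω)
    _ = B := by rw [← sum_mul, hp1, one_mul]

theorem abs_pow_mul_le {γ : ℝ} (hγ : |γ| ≤ 1) (m : ℕ) (x : ℝ) : |γ ^ m * x| ≤ |x| := by
  rw [abs_mul, abs_pow]
  exact mul_le_of_le_one_left (abs_nonneg x) (pow_le_one₀ (abs_nonneg γ) hγ)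

theorem abs_pow_mul_sub_pow_mul_le {γ x y M : ℝ} (hγ : |γ| ≤ 1) (hx : |x| ≤ M) (hy : |y| ≤ M)
    (m n : ℕ) : |γ ^ m * x - γ ^ n * y| ≤ 2 * M :=
  calc |γ ^ m * x - γ ^ n * y| ≤ |γ ^ m * x| + |γ ^ n * y| := abs_sub _ _
    _ ≤ 2 * M := by linarith [abs_pow_mul_le hγ m x, abs_pow_mul_le hγ n y]

def potentialShaping {St Ac : Type*} (γ : ℝ) (φ : St → ℝ) (s : St) (_ : Ac) (s' : St) : ℝ :=
  γ * φ s' - φ s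

section SRRD

variable {St Ac Ω : Type*} [Fintype Ω] (p : Ω → ℝ) (γ : ℝ) (Av : Ω → Ac) (S3 S4 : Ω → St)
  (S1 S2 S5 S6 : St → Ac → St → Ω → St)

/-- The worst case of `Ĉ_SRRD`, in which only the six forward reward terms survive. -/
def srrdCanon (Q : St → Ac → St → ℝ) (s : St) (a : Ac) (s' : St) : ℝ :=
  Q s a s' + ∑ ω, p ω *
    (γ * Q s' (Av ω) (S1 s a s' ω) - Q s (Av ω) (S2 s a s' ω)
     - γ * Q (S3 ω) (Av ω) (S4 ω)
     + γ ^ 2 * Q (S1 s a s' ω) (Av ω) (S5 s a s' ω)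
     - γ * Q (S2 s a s' ω) (Av ω) (S6 s a s' ω))

theorem srrdCanon_add (Q₁ Q₂ : St → Ac → St → ℝ) (s : St) (a : Ac) (s' : St) :
    srrdCanon p γ Av S3 S4 S1 S2 S5 S6 (fun s a s' => Q₁ s a s' + Q₂ s a s') s a s' =
      srrdCanon p γ Av S3 S4 S1 S2 S5 S6 Q₁ s a s' +
        srrdCanon p γ Av S3 S4 S1 S2 S5 S6 Q₂ s a s' := by
  simp only [srrdCanon]
  rw [add_add_add_comm, ← sum_add_distrib]
  congr 1
  exact sum_congr rfl fun ω _ => by ring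

/-- The shaping terms in `φ s`, `φ s'`, `φ (S1 ⋯)` and `φ (S2 ⋯)` cancel, leaving a
transition-dependent residual in `S5`, `S6` and a constant one in `S3`, `S4`. -/
theorem srrdCanon_potentialShaping (hp1 : ∑ ω, p ω = 1) (φ : St → ℝ) (s : St) (a : Ac)
    (s' : St) :
    srrdCanon p γ Av S3 S4 S1 S2 S5 S6 (potentialShaping γ φ) s a s' =
      ∑ ω, p ω * (γ ^ 3 * φ (S5 s a s' ω) - γ ^ 2 * φ (S6 s a s' ω)) +
        ∑ ω, p ω * (γ * φ (S3 ω) - γ ^ 2 * φ (S4 ω)) := by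
  have hconst : γ * φ s' - φ s = ∑ ω, p ω * (γ * φ s' - φ s) := by
    rw [← sum_mul, hp1, one_mul]
  simp only [srrdCanon, potentialShaping]
  rw [hconst, ← sum_add_distrib, ← sum_add_distrib]
  exact sum_congr rfl fun ω _ => by ring

end SRRD

theorem stmt19_general {St Ac Ω : Type*} [Fintype Ω]
    (R : St → Ac → St → ℝ) (φ : St → ℝ) (γ : ℝ) (hγ0 : 0 ≤ γ) (hγ1 : γ ≤ 1)
    (p : Ω → ℝ) (hp0 : ∀ ω, 0 ≤ p ω) (hp1 : ∑ ω, p ω = 1)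
    (Av : Ω → Ac) (S3 S4 : Ω → St)
    (S1 S2 S5 S6 : St → Ac → St → Ω → St)
    (M Z : ℝ) (hM : ∀ s, |φ s| ≤ M) (hZ : 0 < Z) :
    let Chat := fun (Q : St → Ac → St → ℝ) (s : St) (a : Ac) (s' : St) =>
      Q s a s' + ∑ ω, p ω *
        (γ * Q s' (Av ω) (S1 s a s' ω) - Q s (Av ω) (S2 s a s' ω)
         - γ * Q (S3 ω) (Av ω) (S4 ω)
         + γ ^ 2 * Q (S1 s a s' ω) (Av ω) (S5 s a s' ω)
         - γ * Q (S2 s a s' ω) (Av ω) (S6 s a s' ω))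
    let R' := fun (s : St) (a : Ac) (s' : St) => R s a s' + γ * φ s' - φ s
    let eff := fun (s : St) (a : Ac) (s' : St) =>
      ∑ ω, p ω * (γ ^ 3 * φ (S5 s a s' ω) - γ ^ 2 * φ (S6 s a s' ω))
    (∃ K : ℝ, ∀ s a s', Chat R' s a s' = Chat R s a s' + eff s a s' + K) ∧
    (∀ s a s', |eff s a s'| ≤ 2 * M) ∧
    (∀ s a s', |eff s a s'| / (6 * Z) ≤ M / (3 * Z)) := by
  intro Chat R' eff
  have hγ : |γ| ≤ 1 := abs_le.mpr ⟨by linarith, hγ1⟩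
  have hbound : ∀ s a s', |eff s a s'| ≤ 2 * M := fun s a s' =>
    abs_sum_mul_le_of_abs_le hp0 hp1 fun ω => abs_pow_mul_sub_pow_mul_le hγ (hM _) (hM _) 3 2
  have hR' : R' = fun s a s' => R s a s' + potentialShaping γ φ s a s' := by
    funext s a s'
    simp only [R', potentialShaping]
    ring
  refine ⟨⟨∑ ω, p ω * (γ * φ (S3 ω) - γ ^ 2 * φ (S4 ω)), fun s a s' => ?_⟩, hbound,
    fun s a s' => ?_⟩
  · change srrdCanon p γ Av S3 S4 S1 S2 S5 S6 R' s a s' =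
      srrdCanon p γ Av S3 S4 S1 S2 S5 S6 R s a s' + eff s a s' + _
    rw [hR', srrdCanon_add, srrdCanon_potentialShaping p γ Av S3 S4 S1 S2 S5 S6 hp1, add_assoc]
  · calc |eff s a s'| / (6 * Z) ≤ 2 * M / (6 * Z) := by gcongr; exact hbound s a s'
      _ = M / (3 * Z) := by field_simp; ring

/-- Worst-case SRRD canonicalization (the non-forward transition terms retain
only their forward subsets, leaving six reward terms): the effective residual
shaping of `Ĉ_SRRD` applied to `R' = R + γφ(s') − φ(s)` is
`E[γ³φ(S₅) − γ²φ(S₆)]` up to an additive constant, its absolute value is at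
most `2M`, and the relative shaping error (with `n = 6` reward terms) is at
most `M / (3Z)`. Here `S₁, S₂, S₅, S₆` may depend on the transition while
`S₃, S₄` do not. -/
theorem stmt19 {St Ac Ω : Type*} [Fintype Ω]
    (R : St → Ac → St → ℝ) (φ : St → ℝ) (γ : ℝ) (hγ0 : 0 ≤ γ) (hγ1 : γ ≤ 1)
    (p : Ω → ℝ) (hp0 : ∀ ω, 0 ≤ p ω) (hp1 : ∑ ω, p ω = 1)
    (Av : Ω → Ac) (S3 S4 : Ω → St)
    (S1 S2 S5 S6 : St → Ac → St → Ω → St)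
    (M Z : ℝ) (hM : ∀ s, |φ s| ≤ M) (hM0 : 0 ≤ M) (hZ : 0 < Z) :
    let Chat := fun (Q : St → Ac → St → ℝ) (s : St) (a : Ac) (s' : St) =>
      Q s a s' + ∑ ω, p ω *
        (γ * Q s' (Av ω) (S1 s a s' ω) - Q s (Av ω) (S2 s a s' ω)
         - γ * Q (S3 ω) (Av ω) (S4 ω)
         + γ ^ 2 * Q (S1 s a s' ω) (Av ω) (S5 s a s' ω)
         - γ * Q (S2 s a s' ω) (Av ω) (S6 s a s' ω))
    let R' := fun (s : St) (a : Ac) (s' : St) => R s a s' + γ * φ s' - φ s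
    let eff := fun (s : St) (a : Ac) (s' : St) =>
      ∑ ω, p ω * (γ ^ 3 * φ (S5 s a s' ω) - γ ^ 2 * φ (S6 s a s' ω))
    (∃ K : ℝ, ∀ s a s', Chat R' s a s' = Chat R s a s' + eff s a s' + K) ∧
    (∀ s a s', |eff s a s'| ≤ 2 * M) ∧
    (∀ s a s', |eff s a s'| / (6 * Z) ≤ M / (3 * Z)) :=
  stmt19_general R φ γ hγ0 hγ1 p hp0 hp1 Av S3 S4 S1 S2 S5 S6 M Z hM hZ
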